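/- Let K be a field, q ∈ K, and A a finite-dimensional q-generalized flexible algebra over K with product ·, and suppose the dual space A* carries a q-generalized flexible algebra product ∘. Let L·*, R·* : A → End_K(A*) be the transposes of left and right multiplication by ·, and L∘*, R∘* : A* → End_K(A) the transposes of left and right multiplication by ∘. Then the sixtuple (A, A*, R·*, L·*, R∘*, L∘*) is a matched pair of the q-generalized flexible algebras A and A* (i.e. the six matched-pair compatibility relations hold with l_A = R·*, r_A = L·*, l_B = R∘*, r_B = L∘*) if and only if for all x, y ∈ A and all a, b ∈ A* the following three relations hold: (D1) (R∘*(a)x)·y + R∘*(L·*(x)a)y − R∘*(a)(x·y) = q·( L∘*(a)(y·x) − y·(L∘*(a)x) − L∘*(R·*(x)a)y ); (D2) L∘*(a)(x·y) − x·(L∘*(a)y) − L∘*(R·*(y)a)x = q·( (R∘*(a)y)·x + R∘*(L·*(y)a)x − R∘*(a)(y·x) ); (D3) (L∘*(a)x)·y + R∘*(R·*(x)a)y − x·(R∘*(a)y) − L∘*(L·*(y)a)x = q·( (L∘*(a)y)·x + R∘*(R·*(y)a)x − y·(R∘*(a)x) − L∘*(L·*(x)a)y ). -/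
import Mathlib


open Module

/-- The transpose `L∘*` on `A` of the left multiplication of a product on the dual
space `A*`, using the canonical identification `A ≃ (A*)*`. -/
noncomputable def Lcirc {K A : Type*} [Field K] [AddCommGroup A] [Module K A]
    [FiniteDimensional K A]
    (mulD : Dual K A →ₗ[K] Dual K A →ₗ[K] Dual K A) (a : Dual K A) : A →ₗ[K] A :=
  (Module.evalEquiv K A).symm.toLinearMap ∘ₗ (mulD a).dualMap
    ∘ₗ (Module.evalEquiv K A).toLinearMap

/-- The transpose `R∘*` on `A` of the right multiplication of a product on the dual
space `A*`, using the canonical identification `A ≃ (A*)*`. -/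
noncomputable def Rcirc {K A : Type*} [Field K] [AddCommGroup A] [Module K A]
    [FiniteDimensional K A]
    (mulD : Dual K A →ₗ[K] Dual K A →ₗ[K] Dual K A) (a : Dual K A) : A →ₗ[K] A :=
  (Module.evalEquiv K A).symm.toLinearMap ∘ₗ (mulD.flip a).dualMap
    ∘ₗ (Module.evalEquiv K A).toLinearMap

/-- `(A, B, lA, rA, lB, rB)` is a matched pair of the `q`-generalized flexible algebras
`(A, mulA)` and `(B, mulB)`: `(lA, rA, B)` is a bimodule of `A`, `(lB, rB, A)` is a
bimodule of `B`, and the six compatibility relations (M1)–(M6) hold. -/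
def IsMatchedPair {K A B : Type*} [Field K] [AddCommGroup A] [Module K A]
    [AddCommGroup B] [Module K B]
    (q : K) (mulA : A →ₗ[K] A →ₗ[K] A) (mulB : B →ₗ[K] B →ₗ[K] B)
    (lA rA : A → Module.End K B) (lB rB : B → Module.End K A) : Prop :=
  ((∀ x y : A, lA (mulA x y) - lA x * lA y = q • (rA x * rA y - rA (mulA y x))) ∧
   (∀ x y : A, rA x * lA y - lA y * rA x = q • (rA y * lA x - lA x * rA y)) ∧
   (∀ x y : A, rA x * rA y - rA (mulA y x) = q • (lA (mulA x y) - lA x * lA y))) ∧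
  ((∀ a b : B, lB (mulB a b) - lB a * lB b = q • (rB a * rB b - rB (mulB b a))) ∧
   (∀ a b : B, rB a * lB b - lB b * rB a = q • (rB b * lB a - lB a * rB b)) ∧
   (∀ a b : B, rB a * rB b - rB (mulB b a) = q • (lB (mulB a b) - lB a * lB b))) ∧
  (∀ (x y : A) (a : B),
    mulA (lB a x) y + lB (rA x a) y - lB a (mulA x y)
      = q • (rB a (mulA y x) - mulA y (rB a x) - rB (lA x a) y)) ∧
  (∀ (x y : A) (a : B),
    rB a (mulA x y) - mulA x (rB a y) - rB (lA y a) x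
      = q • (mulA (lB a y) x + lB (rA y a) x - lB a (mulA y x))) ∧
  (∀ (x y : A) (a : B),
    mulA (rB a x) y + lB (lA x a) y - mulA x (lB a y) - rB (rA y a) x
      = q • (mulA (rB a y) x + lB (lA y a) x - mulA y (lB a x) - rB (rA x a) y)) ∧
  (∀ (a b : B) (x : A),
    mulB (lA x a) b + lA (rB a x) b - lA x (mulB a b)
      = q • (rA x (mulB b a) - mulB b (rA x a) - rA (lB a x) b)) ∧
  (∀ (a b : B) (x : A),
    rA x (mulB a b) - mulB a (rA x b) - rA (lB b x) a
      = q • (mulB (lA x b) a + lA (rB b x) a - lA x (mulB b a))) ∧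
  (∀ (a b : B) (x : A),
    mulB (rA x a) b + lA (lB a x) b - mulB a (lA x b) - rA (rB b x) a
      = q • (mulB (rA x b) a + lA (lB b x) a - mulB b (lA x a) - rA (rB a x) b))


section Aux
variable {K A : Type*} [Field K] [AddCommGroup A] [Module K A] [FiniteDimensional K A]

lemma pairL (mulD : Dual K A →ₗ[K] Dual K A →ₗ[K] Dual K A) (a c : Dual K A) (x : A) :
    c (Lcirc mulD a x) = mulD a c x := by
  simp [Lcirc, Module.apply_evalEquiv_symm_apply]

lemma pairR (mulD : Dual K A →ₗ[K] Dual K A →ₗ[K] Dual K A) (a c : Dual K A) (x : A) :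
    c (Rcirc mulD a x) = mulD c a x := by
  simp [Rcirc, Module.apply_evalEquiv_symm_apply]

lemma mixLr (mul : A →ₗ[K] A →ₗ[K] A) (mulD : Dual K A →ₗ[K] Dual K A →ₗ[K] Dual K A)
    (a c : Dual K A) (x z : A) :
    c (mul z (Lcirc mulD a x)) = mulD a ((mul z).dualMap c) x := by
  rw [← pairL mulD a ((mul z).dualMap c) x, LinearMap.dualMap_apply]

lemma mixRr (mul : A →ₗ[K] A →ₗ[K] A) (mulD : Dual K A →ₗ[K] Dual K A →ₗ[K] Dual K A)
    (a c : Dual K A) (x z : A) :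
    c (mul z (Rcirc mulD a x)) = mulD ((mul z).dualMap c) a x := by
  rw [← pairR mulD a ((mul z).dualMap c) x, LinearMap.dualMap_apply]

lemma mixLl (mul : A →ₗ[K] A →ₗ[K] A) (mulD : Dual K A →ₗ[K] Dual K A →ₗ[K] Dual K A)
    (a c : Dual K A) (x z : A) :
    c (mul (Lcirc mulD a x) z) = mulD a ((mul.flip z).dualMap c) x := by
  rw [← pairL mulD a ((mul.flip z).dualMap c) x, LinearMap.dualMap_apply,
    LinearMap.flip_apply]

lemma mixRl (mul : A →ₗ[K] A →ₗ[K] A) (mulD : Dual K A →ₗ[K] Dual K A →ₗ[K] Dual K A)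
    (a c : Dual K A) (x z : A) :
    c (mul (Rcirc mulD a x) z) = mulD ((mul.flip z).dualMap c) a x := by
  rw [← pairR mulD a ((mul.flip z).dualMap c) x, LinearMap.dualMap_apply,
    LinearMap.flip_apply]

lemma dual_sep {u v : A} (h : ∀ c : Dual K A, c u = c v) : u = v := by
  apply (Module.evalEquiv K A).injective
  ext c
  simpa using h c

end Aux

/-- for a finite-dimensional `q`-generalized flexible algebra `(A,·)` whose
dual `A*` carries a `q`-generalized flexible product `∘`, the sixtuple
`(A, A*, R·*, L·*, R∘*, L∘*)` is a matched pair iff the three relations (D1)–(D3) hold. -/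
theorem stmt14 {K A : Type*} [Field K] [AddCommGroup A] [Module K A]
    [FiniteDimensional K A]
    (q : K) (mul : A →ₗ[K] A →ₗ[K] A)
    (mulD : Dual K A →ₗ[K] Dual K A →ₗ[K] Dual K A)
    (hflex : ∀ x y z : A,
      mul (mul x y) z - mul x (mul y z) = q • (mul (mul z y) x - mul z (mul y x)))
    (hflexD : ∀ a b c : Dual K A,
      mulD (mulD a b) c - mulD a (mulD b c) = q • (mulD (mulD c b) a - mulD c (mulD b a))) :
    IsMatchedPair q mul mulD
      (fun x => (mul.flip x).dualMap) (fun x => (mul x).dualMap)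
      (fun a => Rcirc mulD a) (fun a => Lcirc mulD a)
    ↔
    ((∀ (x y : A) (a : Dual K A),
        mul (Rcirc mulD a x) y + Rcirc mulD ((mul x).dualMap a) y - Rcirc mulD a (mul x y)
          = q • (Lcirc mulD a (mul y x) - mul y (Lcirc mulD a x)
              - Lcirc mulD ((mul.flip x).dualMap a) y)) ∧
     (∀ (x y : A) (a : Dual K A),
        Lcirc mulD a (mul x y) - mul x (Lcirc mulD a y)
            - Lcirc mulD ((mul.flip y).dualMap a) x
          = q • (mul (Rcirc mulD a y) x + Rcirc mulD ((mul y).dualMap a) x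
              - Rcirc mulD a (mul y x))) ∧
     (∀ (x y : A) (a : Dual K A),
        mul (Lcirc mulD a x) y + Rcirc mulD ((mul.flip x).dualMap a) y
            - mul x (Rcirc mulD a y) - Lcirc mulD ((mul y).dualMap a) x
          = q • (mul (Lcirc mulD a y) x + Rcirc mulD ((mul.flip y).dualMap a) x
              - mul y (Rcirc mulD a x) - Lcirc mulD ((mul x).dualMap a) y)))  := by
  constructor
  · intro h
    exact ⟨h.2.2.1, h.2.2.2.1, h.2.2.2.2.1⟩
  rintro ⟨hD1, hD2, hD3⟩
  refine ⟨⟨?_, ?_, ?_⟩, ⟨?_, ?_, ?_⟩, hD1, hD2, hD3, ?_, ?_, ?_⟩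
  · intro x y
    ext a z
    have h := congrArg a (hflex z x y)
    simp only [map_sub, map_smul, smul_eq_mul] at h
    simp only [LinearMap.sub_apply, LinearMap.smul_apply, Module.End.mul_apply,
      LinearMap.dualMap_apply, LinearMap.flip_apply, smul_eq_mul]
    linear_combination -h
  · intro x y
    ext a z
    have h := congrArg a (hflex x z y)
    simp only [map_sub, map_smul, smul_eq_mul] at h
    simp only [LinearMap.sub_apply, LinearMap.smul_apply, Module.End.mul_apply,
      LinearMap.dualMap_apply, LinearMap.flip_apply, smul_eq_mul]
    linear_combination h
  · intro x y
    ext a z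
    have h := congrArg a (hflex y x z)
    simp only [map_sub, map_smul, smul_eq_mul] at h
    simp only [LinearMap.sub_apply, LinearMap.smul_apply, Module.End.mul_apply,
      LinearMap.dualMap_apply, LinearMap.flip_apply, smul_eq_mul]
    linear_combination -h
  · intro a b
    ext x
    apply dual_sep (K := K)
    intro c
    have h := LinearMap.congr_fun (hflexD c a b) x
    simp only [LinearMap.sub_apply, LinearMap.smul_apply, smul_eq_mul] at h
    simp only [LinearMap.sub_apply, LinearMap.smul_apply, Module.End.mul_apply,
      map_sub, map_smul, pairL, pairR, smul_eq_mul]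
    linear_combination -h
  · intro a b
    ext x
    apply dual_sep (K := K)
    intro c
    have h := LinearMap.congr_fun (hflexD a c b) x
    simp only [LinearMap.sub_apply, LinearMap.smul_apply, smul_eq_mul] at h
    simp only [LinearMap.sub_apply, LinearMap.smul_apply, Module.End.mul_apply,
      map_sub, map_smul, pairL, pairR, smul_eq_mul]
    linear_combination h
  · intro a b
    ext x
    apply dual_sep (K := K)
    intro c
    have h := LinearMap.congr_fun (hflexD b a c) x
    simp only [LinearMap.sub_apply, LinearMap.smul_apply, smul_eq_mul] at h
    simp only [LinearMap.sub_apply, LinearMap.smul_apply, Module.End.mul_apply,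
      map_sub, map_smul, pairL, pairR, smul_eq_mul]
    linear_combination -h
  · intro a b x
    ext z
    have h := congrArg b (hD2 z x a)
    simp only [map_sub, map_add, map_smul, pairL, pairR, mixLr, mixRr, mixLl, mixRl, smul_eq_mul] at h
    simp only [LinearMap.sub_apply, LinearMap.add_apply, LinearMap.smul_apply,
      LinearMap.dualMap_apply, LinearMap.flip_apply, map_sub, map_add, map_smul,
      pairL, pairR, mixLr, mixRr, mixLl, mixRl, smul_eq_mul]
    linear_combination -h
  · intro a b x
    ext z
    have h := congrArg a (hD1 x z b)
    simp only [map_sub, map_add, map_smul, pairL, pairR, mixLr, mixRr, mixLl, mixRl, smul_eq_mul] at h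
    simp only [LinearMap.sub_apply, LinearMap.add_apply, LinearMap.smul_apply,
      LinearMap.dualMap_apply, LinearMap.flip_apply, map_sub, map_add, map_smul,
      pairL, pairR, mixLr, mixRr, mixLl, mixRl, smul_eq_mul]
    linear_combination -h
  · intro a b x
    ext z
    have h := congrArg a (hD3 x z b)
    simp only [map_sub, map_add, map_smul, pairL, pairR, mixLr, mixRr, mixLl, mixRl, smul_eq_mul] at h
    simp only [LinearMap.sub_apply, LinearMap.add_apply, LinearMap.smul_apply,
      LinearMap.dualMap_apply, LinearMap.flip_apply, map_sub, map_add, map_smul,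
      pairL, pairR, mixLr, mixRr, mixLl, mixRl, smul_eq_mul]
    linear_combination -h
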